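/- Let D be the truncated discrete Laplace distribution on {0,...,t} with D[u] proportional to exp(-λ|t/2 - u|), and for x ∈ {0,...,m-1} let D_x place mass D[u] at x + um. If x1 + x2 = x1' + x2' (as integers, with all values in {0,...,m-1}), then for every integer z, (D_{x1} * D_{x2})[z] = (D_{x1'} * D_{x2'})[z], where * denotes convolution. -/

import Mathlib

/-- The truncated discrete Laplace weight `D[u] = exp(-λ|t/2 - u|)/Z` on
`u ∈ {0,...,t}`, where `Z` is the normalizing constant. -/
noncomputable def Dmass (lam : ℝ) (t u : ℕ) : ℝ :=
  Real.exp (-lam * |(t : ℝ) / 2 - u|) /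
    ∑ w ∈ Finset.range (t + 1), Real.exp (-lam * |(t : ℝ) / 2 - w|)

/-- `D_x`: the distribution placing mass `D[u]` on `x + u·m` for `u ∈ {0,...,t}`. -/
noncomputable def Dshift (lam : ℝ) (t m x : ℕ) (z : ℤ) : ℝ :=
  ∑ u ∈ Finset.range (t + 1), if z = (x : ℤ) + u * m then Dmass lam t u else 0

/-- Convolution of mass functions on `ℤ`: `(A*B)[z] = ∑_w A[w]·B[z-w]`. -/
noncomputable def convZ (A B : ℤ → ℝ) (z : ℤ) : ℝ := ∑' w : ℤ, A w * B (z - w)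

/-! `D_x` is the translate of `D_0` by `x`, and translating the factors of a convolution by `a`
and `b` translates it by `a + b`; so `D_{x₁} * D_{x₂}` only depends on `x₁ + x₂`. The shift of
summation index is a bijection of `ℤ`, so no summability is needed. -/

theorem convZ_comp_sub (A B : ℤ → ℝ) (a b z : ℤ) :
    convZ (fun w => A (w - a)) (fun w => B (w - b)) z = convZ A B (z - (a + b)) := by
  unfold convZ
  rw [← (Equiv.addRight a).tsum_eq]
  congr 1 with w
  simp only [Equiv.coe_addRight, add_sub_cancel_right]
  congr 2
  ring

theorem Dshift_eq_comp_sub (lam : ℝ) (t m x : ℕ) :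
    Dshift lam t m x = fun z => Dshift lam t m 0 (z - x) := by
  ext z
  unfold Dshift
  congr 1 with u
  simp only [Nat.cast_zero, zero_add, sub_eq_iff_eq_add']

theorem stmt7_general (lam : ℝ) (t m : ℕ)
    (x1 x2 x1' x2' : ℕ)
    (hsum : x1 + x2 = x1' + x2') :
    ∀ z : ℤ, convZ (Dshift lam t m x1) (Dshift lam t m x2) z
      = convZ (Dshift lam t m x1') (Dshift lam t m x2') z := by
  intro z
  have hsum_int : (x1 : ℤ) + x2 = x1' + x2' := by exact_mod_cast hsum
  rw [Dshift_eq_comp_sub lam t m x1, Dshift_eq_comp_sub lam t m x2,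
    Dshift_eq_comp_sub lam t m x1', Dshift_eq_comp_sub lam t m x2',
    convZ_comp_sub, convZ_comp_sub, hsum_int]

/-- if `x1 + x2 = x1' + x2'` as integers (all in `{0,...,m-1}`),
then `(D_{x1} * D_{x2})[z] = (D_{x1'} * D_{x2'})[z]` for every integer `z`. -/
theorem stmt7 (lam : ℝ) (h0 : 0 < lam) (h1 : lam < 1) (t m : ℕ) (hm : 2 ≤ m)
    (x1 x2 x1' x2' : ℕ) (hx1 : x1 < m) (hx2 : x2 < m) (hx1' : x1' < m) (hx2' : x2' < m)
    (hsum : x1 + x2 = x1' + x2') :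
    ∀ z : ℤ, convZ (Dshift lam t m x1) (Dshift lam t m x2) z
      = convZ (Dshift lam t m x1') (Dshift lam t m x2') z :=
  stmt7_general lam t m x1 x2 x1' x2' hsum
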